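/- Assume w is quasi-definite. Then for every n ≥ 1 the following Szegő recursion relations hold: (i) P^L_{1,n+1}(z) = z·P^L_{1,n}(z) + α^L_{1,n+1}·P̃^R_{2,n}(z) for all z ∈ ℂ; (ii) P̃^R_{2,n}(z) = (α^R_{2,n})†·P^L_{1,n}(z) + (I − (α^R_{2,n})†·α^L_{1,n})·P̃^R_{2,n−1}(z) for all z ∈ ℂ; (iii) Q^L_{1,n+1}(z) = Q^L_{1,n}(z) + α^L_{1,n+1}·Q^R_{2,n}(z) for all z with |z| ≠ 1; (iv) z·Q^R_{2,n}(z) = (α^R_{2,n})†·Q^L_{1,n}(z) + (I − (α^R_{2,n})†·α^L_{1,n})·Q^R_{2,n−1}(z) for all z with |z| ≠ 1. -/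

import Mathlib

open Complex Matrix

noncomputable section

/-- Normalized matrix-valued integral over the unit circle:
`∮ f(ζ) dm(ζ) := (2π)⁻¹ ∫₀^{2π} f(e^{iθ}) dθ`, taken entrywise. -/
def circInt (N : ℕ) (f : ℂ → Matrix (Fin N) (Fin N) ℂ) : Matrix (Fin N) (Fin N) ℂ :=
  Matrix.of fun i j =>
    (2 * Real.pi)⁻¹ • ∫ θ in (0:ℝ)..(2 * Real.pi), f (Complex.exp (θ * Complex.I)) i j

/-- Evaluation at `z` of the matrix polynomial with coefficients `c 0, …, c n`. -/
def mPolyEval {N : ℕ} (c : ℕ → Matrix (Fin N) (Fin N) ℂ) (n : ℕ) (z : ℂ) :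
    Matrix (Fin N) (Fin N) ℂ :=
  ∑ k ∈ Finset.range (n + 1), z ^ k • c k

/-- Evaluation at `z` of the reciprocal polynomial `P̃(z) = ∑_{k=0}^n (c (n-k))ᴴ z^k`. -/
def mRecipEval {N : ℕ} (c : ℕ → Matrix (Fin N) (Fin N) ℂ) (n : ℕ) (z : ℂ) :
    Matrix (Fin N) (Fin N) ℂ :=
  ∑ k ∈ Finset.range (n + 1), z ^ k • (c (n - k))ᴴ

/-- The `j`-th moment `μ̂ j = ∮ w(ζ) ζ^{-j} dm(ζ)` of the matrix weight `w`. -/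
def mMoment (N : ℕ) (w : ℂ → Matrix (Fin N) (Fin N) ℂ) (j : ℤ) : Matrix (Fin N) (Fin N) ℂ :=
  circInt N fun ζ => ζ ^ (-j) • w ζ

/-- Quasi-definiteness: all the truncated block Toeplitz moment matrices
`M^L_[n]` and `M^R_[n]` are invertible. -/
def QuasiDef (N : ℕ) (w : ℂ → Matrix (Fin N) (Fin N) ℂ) : Prop :=
  ∀ n : ℕ, 1 ≤ n →
    IsUnit (Matrix.of fun p q : Fin n × Fin N =>
      mMoment N w ((p.1 : ℤ) - (q.1 : ℤ)) p.2 q.2) ∧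
    IsUnit (Matrix.of fun p q : Fin n × Fin N =>
      mMoment N w ((q.1 : ℤ) - (p.1 : ℤ)) p.2 q.2)

/-- `P n` lists the coefficients of the monic degree-`n` Szegő polynomial `P^L_{1,n}`:
monicity together with `∮ P^L_{1,n}(ζ) w(ζ) ζ^{-j} dm(ζ) = 0` for `j = 0,…,n-1`. -/
def IsSzPL1 (N : ℕ) (w : ℂ → Matrix (Fin N) (Fin N) ℂ)
    (P : ℕ → ℕ → Matrix (Fin N) (Fin N) ℂ) : Prop :=
  ∀ n : ℕ, P n n = 1 ∧ (∀ k, n < k → P n k = 0) ∧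
    ∀ j < n, circInt N (fun ζ => ζ ^ (-(j : ℤ)) • (mPolyEval (P n) n ζ * w ζ)) = 0

/-- `P n` lists the coefficients of the monic degree-`n` Szegő polynomial `P^R_{1,n}`:
monicity together with `∮ ζ^{-j} w(ζ) P^R_{1,n}(ζ) dm(ζ) = 0` for `j = 0,…,n-1`. -/
def IsSzPR1 (N : ℕ) (w : ℂ → Matrix (Fin N) (Fin N) ℂ)
    (P : ℕ → ℕ → Matrix (Fin N) (Fin N) ℂ) : Prop :=
  ∀ n : ℕ, P n n = 1 ∧ (∀ k, n < k → P n k = 0) ∧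
    ∀ j < n, circInt N (fun ζ => ζ ^ (-(j : ℤ)) • (w ζ * mPolyEval (P n) n ζ)) = 0

/-- `P n` lists the coefficients of the monic degree-`n` Szegő polynomial `P^L_{2,n}`:
monicity together with `∮ ζ^{j} w(ζ) (P^L_{2,n}(ζ))† dm(ζ) = 0` for `j = 0,…,n-1`. -/
def IsSzPL2 (N : ℕ) (w : ℂ → Matrix (Fin N) (Fin N) ℂ)
    (P : ℕ → ℕ → Matrix (Fin N) (Fin N) ℂ) : Prop :=
  ∀ n : ℕ, P n n = 1 ∧ (∀ k, n < k → P n k = 0) ∧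
    ∀ j < n, circInt N (fun ζ => ζ ^ j • (w ζ * (mPolyEval (P n) n ζ)ᴴ)) = 0

/-- `P n` lists the coefficients of the monic degree-`n` Szegő polynomial `P^R_{2,n}`:
monicity together with `∮ (P^R_{2,n}(ζ))† w(ζ) ζ^{j} dm(ζ) = 0` for `j = 0,…,n-1`. -/
def IsSzPR2 (N : ℕ) (w : ℂ → Matrix (Fin N) (Fin N) ℂ)
    (P : ℕ → ℕ → Matrix (Fin N) (Fin N) ℂ) : Prop :=
  ∀ n : ℕ, P n n = 1 ∧ (∀ k, n < k → P n k = 0) ∧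
    ∀ j < n, circInt N (fun ζ => ζ ^ j • ((mPolyEval (P n) n ζ)ᴴ * w ζ)) = 0

/-- The Verblunsky matrix of the family `P`: the value at `0` of its `n`-th member. -/
def szVer {N : ℕ} (P : ℕ → ℕ → Matrix (Fin N) (Fin N) ℂ) (n : ℕ) :
    Matrix (Fin N) (Fin N) ℂ :=
  mPolyEval (P n) n 0

/-- Quasi-tau matrix `H^L_n = ∮ P^L_{1,n}(ζ) w(ζ) ζ^{-n} dm(ζ)` (from the family `P^L_{1,·}`). -/
def szHL (N : ℕ) (w : ℂ → Matrix (Fin N) (Fin N) ℂ)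
    (P : ℕ → ℕ → Matrix (Fin N) (Fin N) ℂ) (n : ℕ) : Matrix (Fin N) (Fin N) ℂ :=
  circInt N fun ζ => ζ ^ (-(n : ℤ)) • (mPolyEval (P n) n ζ * w ζ)

/-- Quasi-tau matrix `H^R_n = ∮ ζ^{-n} w(ζ) P^R_{1,n}(ζ) dm(ζ)` (from the family `P^R_{1,·}`). -/
def szHR (N : ℕ) (w : ℂ → Matrix (Fin N) (Fin N) ℂ)
    (P : ℕ → ℕ → Matrix (Fin N) (Fin N) ℂ) (n : ℕ) : Matrix (Fin N) (Fin N) ℂ :=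
  circInt N fun ζ => ζ ^ (-(n : ℤ)) • (w ζ * mPolyEval (P n) n ζ)

/-- Cauchy transform `Q^L_{1,n}(z) = ∮ ζ^{-n} P^L_{1,n}(ζ) w(ζ) (1-ζ^{-1}z)^{-1} dm(ζ)`. -/
def szQL1 (N : ℕ) (w : ℂ → Matrix (Fin N) (Fin N) ℂ)
    (P : ℕ → ℕ → Matrix (Fin N) (Fin N) ℂ) (n : ℕ) (z : ℂ) : Matrix (Fin N) (Fin N) ℂ :=
  circInt N fun ζ => (ζ ^ (-(n : ℤ)) * (1 - ζ⁻¹ * z)⁻¹) • (mPolyEval (P n) n ζ * w ζ)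

/-- Cauchy transform `Q^R_{2,n}(z) = ∮ ζ^{-(n+1)} P̃^R_{2,n}(ζ) w(ζ) (1-ζ^{-1}z)^{-1} dm(ζ)`. -/
def szQR2 (N : ℕ) (w : ℂ → Matrix (Fin N) (Fin N) ℂ)
    (P : ℕ → ℕ → Matrix (Fin N) (Fin N) ℂ) (n : ℕ) (z : ℂ) : Matrix (Fin N) (Fin N) ℂ :=
  circInt N fun ζ => (ζ ^ (-((n : ℤ) + 1)) * (1 - ζ⁻¹ * z)⁻¹) • (mRecipEval (P n) n ζ * w ζ)

/-!
Both polynomial recursions come from one uniqueness principle: since the block Toeplitz matrix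
`M^R_[m]` is invertible, a matrix polynomial `F` of degree at most `m` with `F(0) = 0` and
`∮ F(ζ) w(ζ) ζ^{-j} dm(ζ) = 0` for `j = 1, …, m` vanishes. In (i) and (ii) the difference of the
two sides has degree at most `n` (resp. `n - 1`) because the leading coefficients cancel, it
vanishes at `0` by the definition of the Verblunsky matrices, and it is orthogonal because
`P^L_{1,n}` is and because `P̃^R_{2,n}(ζ) = ζ^n P^R_{2,n}(ζ)†` on the unit circle. Integrating (i)
and (ii) against the Cauchy kernel gives (iii) and (iv); for (iv) one also uses
`z ζ^{-1} (1 - ζ^{-1} z)^{-1} = (1 - ζ^{-1} z)^{-1} - 1` and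
`∮ P̃^R_{2,n}(ζ) w(ζ) ζ^{-n} dm(ζ) = 0`.
-/

open Metric Finset

variable {N : ℕ}

lemma exp_mul_I_mem_sphere (θ : ℝ) : exp (θ * I) ∈ sphere (0 : ℂ) 1 := by
  simp [norm_exp_ofReal_mul_I]

section CircleIntegral

variable {f g : ℂ → Matrix (Fin N) (Fin N) ℂ}

lemma intervalIntegrable_circle_entry (hf : ContinuousOn f (sphere 0 1)) (i j : Fin N) :
    IntervalIntegrable (fun θ : ℝ => f (exp (θ * I)) i j) MeasureTheory.volume 0
      (2 * Real.pi) :=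
  ((hf.comp_continuous (by fun_prop) exp_mul_I_mem_sphere).matrix_elem i j).intervalIntegrable
    _ _

lemma circInt_congr (h : Set.EqOn f g (sphere 0 1)) : circInt N f = circInt N g := by
  ext i j
  simp only [circInt, of_apply, h (exp_mul_I_mem_sphere _)]

lemma circInt_add (hf : ContinuousOn f (sphere 0 1)) (hg : ContinuousOn g (sphere 0 1)) :
    circInt N (fun ζ => f ζ + g ζ) = circInt N f + circInt N g := by
  ext i j
  simp only [circInt, of_apply, Matrix.add_apply, intervalIntegral.integral_add
    (intervalIntegrable_circle_entry hf i j) (intervalIntegrable_circle_entry hg i j), smul_add]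

lemma circInt_sub (hf : ContinuousOn f (sphere 0 1)) (hg : ContinuousOn g (sphere 0 1)) :
    circInt N (fun ζ => f ζ - g ζ) = circInt N f - circInt N g := by
  ext i j
  simp only [circInt, of_apply, Matrix.sub_apply, intervalIntegral.integral_sub
    (intervalIntegrable_circle_entry hf i j) (intervalIntegrable_circle_entry hg i j), smul_sub]

lemma circInt_sum {ι : Type*} (s : Finset ι) {f : ι → ℂ → Matrix (Fin N) (Fin N) ℂ}
    (hf : ∀ k ∈ s, ContinuousOn (f k) (sphere 0 1)) :
    circInt N (fun ζ => ∑ k ∈ s, f k ζ) = ∑ k ∈ s, circInt N (f k) := by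
  ext i j
  simp only [circInt, of_apply, Matrix.sum_apply, intervalIntegral.integral_finsetSum
    fun k hk => intervalIntegrable_circle_entry (hf k hk) i j, smul_sum]

lemma circInt_mul_left (hf : ContinuousOn f (sphere 0 1)) (A : Matrix (Fin N) (Fin N) ℂ) :
    circInt N (fun ζ => A * f ζ) = A * circInt N f := by
  ext i j
  simp only [circInt, of_apply, mul_apply, intervalIntegral.integral_finsetSum
    fun b _ => (intervalIntegrable_circle_entry hf b j).const_mul (A i b), smul_sum,
    intervalIntegral.integral_const_mul, mul_smul_comm]

lemma circInt_smul (c : ℂ) : circInt N (fun ζ => c • f ζ) = c • circInt N f := by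
  ext i j
  simp only [circInt, of_apply, Matrix.smul_apply, smul_eq_mul,
    intervalIntegral.integral_const_mul, mul_smul_comm]

end CircleIntegral

section MatrixPolynomial

variable (c d : ℕ → Matrix (Fin N) (Fin N) ℂ) (n : ℕ) (z : ℂ)

def shiftCoeff : ℕ → Matrix (Fin N) (Fin N) ℂ
  | 0 => 0
  | k + 1 => c k

lemma mPolyEval_at_zero : mPolyEval c n 0 = c 0 := by
  rw [mPolyEval, sum_eq_single 0 (fun k _ hk => by simp [zero_pow hk]) (by simp)]
  simp

lemma mPolyEval_sub : mPolyEval (c - d) n z = mPolyEval c n z - mPolyEval d n z := by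
  simp only [mPolyEval, Pi.sub_apply, smul_sub, sum_sub_distrib]

lemma mPolyEval_mul_left (A : Matrix (Fin N) (Fin N) ℂ) :
    mPolyEval (fun k => A * c k) n z = A * mPolyEval c n z := by
  simp only [mPolyEval, mul_sum, mul_smul_comm]

lemma mPolyEval_succ_sub_of_eq (h : c (n + 1) = d (n + 1)) :
    mPolyEval c (n + 1) z - mPolyEval d (n + 1) z = mPolyEval (c - d) n z := by
  rw [← mPolyEval_sub, mPolyEval, sum_range_succ, Pi.sub_apply, h, sub_self, smul_zero, add_zero]
  rfl

lemma smul_mPolyEval : z • mPolyEval c n z = mPolyEval (shiftCoeff c) (n + 1) z := by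
  rw [mPolyEval, mPolyEval, sum_range_succ' (fun k => z ^ k • shiftCoeff c k)]
  simp only [shiftCoeff, smul_zero, add_zero, smul_sum, smul_smul, pow_succ']

@[fun_prop]
lemma continuous_mPolyEval : Continuous (mPolyEval c n) := by
  unfold mPolyEval
  fun_prop

@[fun_prop]
lemma continuous_mRecipEval : Continuous (mRecipEval c n) :=
  continuous_mPolyEval _ n

lemma mRecipEval_at_zero : mRecipEval c n 0 = (c n)ᴴ :=
  mPolyEval_at_zero _ n

lemma mRecipEval_of_norm_eq_one {ζ : ℂ} (hζ : ‖ζ‖ = 1) :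
    mRecipEval c n ζ = ζ ^ n • (mPolyEval c n ζ)ᴴ := by
  have hζ0 : ζ ≠ 0 := norm_ne_zero_iff.mp (hζ ▸ one_ne_zero)
  rw [mPolyEval, conjTranspose_sum, smul_sum, mRecipEval, ← sum_range_reflect]
  refine sum_congr rfl fun k hk => ?_
  have hk : k ≤ n := Nat.lt_succ_iff.mp (mem_range.mp hk)
  rw [conjTranspose_smul, smul_smul, star_pow, Complex.star_def, ← inv_eq_conj hζ,
    Nat.add_sub_cancel, Nat.sub_sub_self hk, inv_pow, pow_sub₀ _ hζ0 hk]

end MatrixPolynomial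

section WeightedIntegral

variable (w : ℂ → Matrix (Fin N) (Fin N) ℂ)

/-- `∮ g(ζ) F(ζ) w(ζ) dm(ζ)`: both the orthogonality integrals and the Cauchy transforms have
this form. -/
def leftInt (g : ℂ → ℂ) (F : ℂ → Matrix (Fin N) (Fin N) ℂ) : Matrix (Fin N) (Fin N) ℂ :=
  circInt N fun ζ => g ζ • (F ζ * w ζ)

variable {w} {g g' : ℂ → ℂ} {F G : ℂ → Matrix (Fin N) (Fin N) ℂ}

lemma ne_zero_of_mem_sphere_one {ζ : ℂ} (hζ : ζ ∈ sphere (0 : ℂ) 1) : ζ ≠ 0 :=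
  ne_zero_of_mem_unit_sphere ⟨ζ, hζ⟩

lemma continuousOn_zpow_sphere (t : ℤ) : ContinuousOn (fun ζ : ℂ => ζ ^ t) (sphere 0 1) := by
  fun_prop (disch := exact fun ζ hζ => Or.inl (ne_zero_of_mem_sphere_one hζ))

lemma one_sub_inv_mul_ne_zero {z ζ : ℂ} (hz : ‖z‖ ≠ 1) (hζ : ζ ∈ sphere (0 : ℂ) 1) :
    1 - ζ⁻¹ * z ≠ 0 := by
  rw [sub_ne_zero, ne_comm, Ne, inv_mul_eq_one₀ (ne_zero_of_mem_sphere_one hζ)]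
  rintro rfl
  exact hz (mem_sphere_zero_iff_norm.mp hζ)

lemma continuousOn_zpow_mul_cauchyKernel {z : ℂ} (hz : ‖z‖ ≠ 1) (t : ℤ) :
    ContinuousOn (fun ζ : ℂ => ζ ^ t * (1 - ζ⁻¹ * z)⁻¹) (sphere 0 1) := by
  refine (continuousOn_zpow_sphere t).mul (ContinuousOn.inv₀ ?_ fun ζ hζ =>
    one_sub_inv_mul_ne_zero hz hζ)
  fun_prop (disch := exact fun ζ hζ => ne_zero_of_mem_sphere_one hζ)

lemma continuousOn_leftInt_integrand (hw : Continuous w) (hg : ContinuousOn g (sphere 0 1))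
    (hF : Continuous F) : ContinuousOn (fun ζ => g ζ • (F ζ * w ζ)) (sphere 0 1) :=
  hg.smul (hF.mul hw).continuousOn

lemma leftInt_congr (hg : Set.EqOn g g' (sphere 0 1)) : leftInt w g F = leftInt w g' F :=
  circInt_congr fun ζ hζ => by simp only [hg hζ]

lemma leftInt_add (hw : Continuous w) (hg : ContinuousOn g (sphere 0 1)) (hF : Continuous F)
    (hG : Continuous G) :
    leftInt w g (fun ζ => F ζ + G ζ) = leftInt w g F + leftInt w g G := by
  simp only [leftInt, add_mul, smul_add]
  exact circInt_add (continuousOn_leftInt_integrand hw hg hF)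
    (continuousOn_leftInt_integrand hw hg hG)

lemma leftInt_sub (hw : Continuous w) (hg : ContinuousOn g (sphere 0 1)) (hF : Continuous F)
    (hG : Continuous G) :
    leftInt w g (fun ζ => F ζ - G ζ) = leftInt w g F - leftInt w g G := by
  simp only [leftInt, sub_mul, smul_sub]
  exact circInt_sub (continuousOn_leftInt_integrand hw hg hF)
    (continuousOn_leftInt_integrand hw hg hG)

lemma leftInt_sub_weight (hw : Continuous w) (hg : ContinuousOn g (sphere 0 1))
    (hg' : ContinuousOn g' (sphere 0 1)) (hF : Continuous F) :
    leftInt w (fun ζ => g ζ - g' ζ) F = leftInt w g F - leftInt w g' F := by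
  simp only [leftInt, sub_smul]
  exact circInt_sub (continuousOn_leftInt_integrand hw hg hF)
    (continuousOn_leftInt_integrand hw hg' hF)

lemma leftInt_mul_left (hw : Continuous w) (hg : ContinuousOn g (sphere 0 1))
    (hF : Continuous F) (A : Matrix (Fin N) (Fin N) ℂ) :
    leftInt w g (fun ζ => A * F ζ) = A * leftInt w g F := by
  rw [leftInt, leftInt, ← circInt_mul_left (continuousOn_leftInt_integrand hw hg hF) A]
  simp only [mul_assoc, mul_smul_comm]

lemma smul_leftInt (c : ℂ) : c • leftInt w g F = leftInt w (fun ζ => c * g ζ) F := by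
  simp only [leftInt, ← circInt_smul, smul_smul]

lemma leftInt_smul_id : leftInt w g (fun ζ => ζ • F ζ) = leftInt w (fun ζ => g ζ * ζ) F := by
  simp only [leftInt, smul_mul_assoc, smul_smul]

end WeightedIntegral

section Orthogonality

variable {w : ℂ → Matrix (Fin N) (Fin N) ℂ}

lemma leftInt_zpow_mPolyEval (hw : Continuous w) (c : ℕ → Matrix (Fin N) (Fin N) ℂ) (m : ℕ)
    (j : ℤ) :
    leftInt w (fun ζ => ζ ^ (-j)) (mPolyEval c m) =
      ∑ k ∈ range (m + 1), c k * mMoment N w (j - k) := by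
  have hpt : Set.EqOn (fun ζ => ζ ^ (-j) • (mPolyEval c m ζ * w ζ))
      (fun ζ => ∑ k ∈ range (m + 1), c k * (ζ ^ (-(j - k)) • w ζ)) (sphere 0 1) := by
    intro ζ hζ
    simp only [mPolyEval, sum_mul, smul_sum, smul_mul_assoc, mul_smul_comm, smul_smul,
      ← zpow_natCast, ← zpow_add₀ (ne_zero_of_mem_sphere_one hζ)]
    exact sum_congr rfl fun k _ => by rw [neg_sub, sub_eq_neg_add]
  rw [leftInt, circInt_congr hpt, circInt_sum]
  · exact sum_congr rfl fun k _ =>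
      circInt_mul_left ((continuousOn_zpow_sphere _).smul hw.continuousOn) (c k)
  · exact fun k _ => ContinuousOn.mul continuousOn_const
      ((continuousOn_zpow_sphere _).smul hw.continuousOn)

def rightToeplitz (w : ℂ → Matrix (Fin N) (Fin N) ℂ) (m : ℕ) :
    Matrix (Fin m × Fin N) (Fin m × Fin N) ℂ :=
  Matrix.of fun p q => mMoment N w ((q.1 : ℤ) - (p.1 : ℤ)) p.2 q.2

lemma QuasiDef.isUnit_rightToeplitz (hqd : QuasiDef N w) (m : ℕ) :
    IsUnit (rightToeplitz w m) := by
  rcases Nat.eq_zero_or_pos m with rfl | hm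
  · exact isUnit_of_subsingleton _
  · exact (hqd m hm).2

lemma eq_zero_of_sum_mul_mMoment_eq_zero {m : ℕ} (hM : IsUnit (rightToeplitz w m))
    {d : Fin m → Matrix (Fin N) (Fin N) ℂ}
    (h : ∀ q : Fin m, ∑ p, d p * mMoment N w ((q : ℤ) - p) = 0) : d = 0 := by
  funext p
  ext a b
  have hv : (fun x : Fin m × Fin N => d x.1 a x.2) ᵥ* rightToeplitz w m =
      0 ᵥ* rightToeplitz w m := by
    funext q
    simpa [vecMul, dotProduct, rightToeplitz, Fintype.sum_prod_type, mul_apply, Matrix.sum_apply]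
      using congr($(h q.1) a q.2)
  exact congrFun (vecMul_injective_of_isUnit hM hv) (p, b)

theorem eq_zero_of_orthogonal (hw : Continuous w) {m : ℕ} (hM : IsUnit (rightToeplitz w m))
    {F : ℂ → Matrix (Fin N) (Fin N) ℂ} {c : ℕ → Matrix (Fin N) (Fin N) ℂ}
    (hF : F = mPolyEval c m) (hF0 : F 0 = 0)
    (horth : ∀ j : ℕ, 1 ≤ j → j ≤ m → leftInt w (fun ζ => ζ ^ (-(j : ℤ))) F = 0) : F = 0 := by
  subst hF
  rw [mPolyEval_at_zero] at hF0
  have hd : (fun p : Fin m => c (p + 1)) = 0 := by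
    refine eq_zero_of_sum_mul_mMoment_eq_zero hM fun q => ?_
    have := horth (q + 1) (by omega) q.isLt
    rw [leftInt_zpow_mPolyEval hw, sum_range_succ', hF0, zero_mul, add_zero,
      ← Fin.sum_univ_eq_sum_range] at this
    push_cast [add_sub_add_right_eq_sub] at this
    exact this
  have hc : ∀ k ≤ m, c k = 0
    | 0, _ => hF0
    | k + 1, hk => congrFun hd ⟨k, hk⟩
  funext z
  exact sum_eq_zero fun k hk => by rw [hc k (Nat.lt_succ_iff.mp (mem_range.mp hk)), smul_zero]

end Orthogonality

section Recursion

variable {w : ℂ → Matrix (Fin N) (Fin N) ℂ} {P R : ℕ → ℕ → Matrix (Fin N) (Fin N) ℂ}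

lemma IsSzPL1.leftInt_mPolyEval_eq_zero (hP : IsSzPL1 N w P) {n j : ℕ} (hjn : j < n) :
    leftInt w (fun ζ => ζ ^ (-(j : ℤ))) (mPolyEval (P n) n) = 0 :=
  (hP n).2.2 j hjn

lemma IsSzPR2.leftInt_mRecipEval_eq_zero (hR : IsSzPR2 N w R) {n j : ℕ} (hj : 1 ≤ j)
    (hjn : j ≤ n) : leftInt w (fun ζ => ζ ^ (-(j : ℤ))) (mRecipEval (R n) n) = 0 := by
  rw [← (hR n).2.2 (n - j) (by omega)]
  refine circInt_congr fun ζ hζ => ?_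
  simp only [mRecipEval_of_norm_eq_one _ _ (mem_sphere_zero_iff_norm.mp hζ), smul_mul_assoc,
    smul_smul, ← zpow_natCast, ← zpow_add₀ (ne_zero_of_mem_sphere_one hζ)]
  push_cast [Nat.cast_sub hjn]
  ring_nf

theorem IsSzPL1.mPolyEval_succ (hw : Continuous w) (hqd : QuasiDef N w) (hP : IsSzPL1 N w P)
    (hR : IsSzPR2 N w R) (n : ℕ) (z : ℂ) :
    mPolyEval (P (n + 1)) (n + 1) z =
      z • mPolyEval (P n) n z + szVer P (n + 1) * mRecipEval (R n) n z := by
  set α := szVer P (n + 1)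
  have hzero : (fun ζ => mPolyEval (P (n + 1)) (n + 1) ζ - ζ • mPolyEval (P n) n ζ
      - α * mRecipEval (R n) n ζ) = 0 := by
    refine eq_zero_of_orthogonal hw (hqd.isUnit_rightToeplitz n)
      (c := (P (n + 1) - shiftCoeff (P n)) - fun k => α * (R n (n - k))ᴴ) (funext fun ζ => ?_)
      ?_ fun j hj hjn => ?_
    · rw [mPolyEval_sub, ← mPolyEval_succ_sub_of_eq _ _ _ _ ((hP _).1.trans (hP n).1.symm),
        smul_mPolyEval, mPolyEval_mul_left]
      rfl
    · simp [α, szVer, mRecipEval_at_zero, (hR n).1]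
    · have hshift :
          leftInt w (fun ζ => ζ ^ (-(j : ℤ))) (fun ζ => ζ • mPolyEval (P n) n ζ) = 0 := by
        rw [leftInt_smul_id, ← hP.leftInt_mPolyEval_eq_zero (n := n) (j := j - 1) (by omega)]
        refine leftInt_congr fun ζ hζ => ?_
        rw [← zpow_add_one₀ (ne_zero_of_mem_sphere_one hζ)]
        push_cast [Nat.cast_sub hj]
        ring_nf
      rw [leftInt_sub hw (continuousOn_zpow_sphere _) (by fun_prop) (by fun_prop),
        leftInt_sub hw (continuousOn_zpow_sphere _) (by fun_prop) (by fun_prop),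
        leftInt_mul_left hw (continuousOn_zpow_sphere _) (by fun_prop), hshift,
        hP.leftInt_mPolyEval_eq_zero (n := n + 1) (by omega),
        hR.leftInt_mRecipEval_eq_zero hj hjn]
      simp
  simpa [sub_sub, sub_eq_zero] using congrFun hzero z

theorem IsSzPR2.mRecipEval_succ (hw : Continuous w) (hqd : QuasiDef N w) (hP : IsSzPL1 N w P)
    (hR : IsSzPR2 N w R) (m : ℕ) (z : ℂ) :
    mRecipEval (R (m + 1)) (m + 1) z =
      (szVer R (m + 1))ᴴ * mPolyEval (P (m + 1)) (m + 1) z +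
        (1 - (szVer R (m + 1))ᴴ * szVer P (m + 1)) * mRecipEval (R m) m z := by
  set A := (szVer R (m + 1))ᴴ
  set B := 1 - A * szVer P (m + 1)
  have hzero : (fun ζ => mRecipEval (R (m + 1)) (m + 1) ζ
      - A * mPolyEval (P (m + 1)) (m + 1) ζ - B * mRecipEval (R m) m ζ) = 0 := by
    refine eq_zero_of_orthogonal hw (QuasiDef.isUnit_rightToeplitz hqd m)
      (c := ((fun k => (R (m + 1) (m + 1 - k))ᴴ) - fun k => A * P (m + 1) k)
        - fun k => B * (R m (m - k))ᴴ) (funext fun ζ => ?_) ?_ fun j hj hjm => ?_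
    · rw [mPolyEval_sub, ← mPolyEval_succ_sub_of_eq, mPolyEval_mul_left, mPolyEval_mul_left]
      · rfl
      · simp [A, szVer, mPolyEval_at_zero, (hP _).1]
    · simp [A, B, szVer, mPolyEval_at_zero, mRecipEval_at_zero, (hR _).1]
    · rw [leftInt_sub hw (continuousOn_zpow_sphere _) (by fun_prop) (by fun_prop),
        leftInt_sub hw (continuousOn_zpow_sphere _) (by fun_prop) (by fun_prop),
        leftInt_mul_left hw (continuousOn_zpow_sphere _) (by fun_prop),
        leftInt_mul_left hw (continuousOn_zpow_sphere _) (by fun_prop),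
        hR.leftInt_mRecipEval_eq_zero (n := m + 1) hj (by omega),
        hP.leftInt_mPolyEval_eq_zero (n := m + 1) (by omega),
        hR.leftInt_mRecipEval_eq_zero hj hjm]
      simp
  simpa [sub_sub, sub_eq_zero] using congrFun hzero z

theorem szQL1_succ (hw : Continuous w) (hqd : QuasiDef N w) (hP : IsSzPL1 N w P)
    (hR : IsSzPR2 N w R) (n : ℕ) {z : ℂ} (hz : ‖z‖ ≠ 1) :
    szQL1 N w P (n + 1) z = szQL1 N w P n z + szVer P (n + 1) * szQR2 N w R n z := by
  set g := fun ζ : ℂ => ζ ^ (-((n : ℤ) + 1)) * (1 - ζ⁻¹ * z)⁻¹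
  have hg : ContinuousOn g (sphere 0 1) := continuousOn_zpow_mul_cauchyKernel hz _
  calc szQL1 N w P (n + 1) z
      = leftInt w g
          (fun ζ => ζ • mPolyEval (P n) n ζ + szVer P (n + 1) * mRecipEval (R n) n ζ) := by
        simp only [szQL1, leftInt, g, hP.mPolyEval_succ hw hqd hR]
        push_cast
        rfl
    _ = leftInt w (fun ζ => g ζ * ζ) (mPolyEval (P n) n) + szVer P (n + 1) * szQR2 N w R n z := by
        rw [leftInt_add hw hg (by fun_prop) (by fun_prop), leftInt_mul_left hw hg (by fun_prop),
          leftInt_smul_id]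
        rfl
    _ = szQL1 N w P n z + szVer P (n + 1) * szQR2 N w R n z := by
        congr 1
        refine leftInt_congr fun ζ hζ => ?_
        rw [mul_right_comm, ← zpow_add_one₀ (ne_zero_of_mem_sphere_one hζ)]
        ring_nf

theorem smul_szQR2_succ (hw : Continuous w) (hqd : QuasiDef N w) (hP : IsSzPL1 N w P)
    (hR : IsSzPR2 N w R) (m : ℕ) {z : ℂ} (hz : ‖z‖ ≠ 1) :
    z • szQR2 N w R (m + 1) z =
      (szVer R (m + 1))ᴴ * szQL1 N w P (m + 1) z +
        (1 - (szVer R (m + 1))ᴴ * szVer P (m + 1)) * szQR2 N w R m z := by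
  set g := fun ζ : ℂ => ζ ^ (-((m : ℤ) + 1)) * (1 - ζ⁻¹ * z)⁻¹
  have hg : ContinuousOn g (sphere 0 1) := continuousOn_zpow_mul_cauchyKernel hz _
  calc z • szQR2 N w R (m + 1) z
      = leftInt w (fun ζ => g ζ - ζ ^ (-((m + 1 : ℕ) : ℤ)))
          (mRecipEval (R (m + 1)) (m + 1)) := by
        rw [szQR2, ← leftInt, smul_leftInt]
        refine leftInt_congr fun ζ hζ => ?_
        have hK := mul_inv_cancel₀ (one_sub_inv_mul_ne_zero hz hζ)
        rw [show -(((m + 1 : ℕ) : ℤ) + 1) = -((m : ℤ) + 1) - 1 by push_cast; ring,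
          zpow_sub_one₀ (ne_zero_of_mem_sphere_one hζ)]
        push_cast
        linear_combination (-(ζ ^ (-((m : ℤ) + 1)))) * hK
    _ = leftInt w g (mRecipEval (R (m + 1)) (m + 1)) := by
        rw [leftInt_sub_weight hw hg (continuousOn_zpow_sphere _) (by fun_prop),
          hR.leftInt_mRecipEval_eq_zero (Nat.le_add_left 1 m) le_rfl, sub_zero]
    _ = leftInt w g (fun ζ => (szVer R (m + 1))ᴴ * mPolyEval (P (m + 1)) (m + 1) ζ +
          (1 - (szVer R (m + 1))ᴴ * szVer P (m + 1)) * mRecipEval (R m) m ζ) := by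
        congr 1
        exact funext (hR.mRecipEval_succ hw hqd hP m)
    _ = _ := by
        rw [leftInt_add hw hg (by fun_prop) (by fun_prop), leftInt_mul_left hw hg (by fun_prop),
          leftInt_mul_left hw hg (by fun_prop)]
        simp only [szQL1, szQR2, leftInt, g]
        push_cast
        rfl

end Recursion

theorem statement8_general {N : ℕ} (w : ℂ → Matrix (Fin N) (Fin N) ℂ)
    (hw : Continuous w) (hqd : QuasiDef N w)
    (PL1 PR2 : ℕ → ℕ → Matrix (Fin N) (Fin N) ℂ)
    (hPL1 : IsSzPL1 N w PL1) (hPR2 : IsSzPR2 N w PR2) :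
    ∀ n : ℕ, 1 ≤ n →
      (∀ z : ℂ, mPolyEval (PL1 (n+1)) (n+1) z =
        z • mPolyEval (PL1 n) n z + szVer PL1 (n+1) * mRecipEval (PR2 n) n z) ∧
      (∀ z : ℂ, mRecipEval (PR2 n) n z =
        (szVer PR2 n)ᴴ * mPolyEval (PL1 n) n z +
          (1 - (szVer PR2 n)ᴴ * szVer PL1 n) * mRecipEval (PR2 (n-1)) (n-1) z) ∧
      (∀ z : ℂ, ‖z‖ ≠ 1 →
        szQL1 N w PL1 (n+1) z =
          szQL1 N w PL1 n z + szVer PL1 (n+1) * szQR2 N w PR2 n z) ∧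
      (∀ z : ℂ, ‖z‖ ≠ 1 →
        z • szQR2 N w PR2 n z =
          (szVer PR2 n)ᴴ * szQL1 N w PL1 n z +
            (1 - (szVer PR2 n)ᴴ * szVer PL1 n) * szQR2 N w PR2 (n-1) z) := by
  intro n hn
  obtain ⟨m, rfl⟩ := Nat.exists_eq_add_of_le' hn
  exact ⟨hPL1.mPolyEval_succ hw hqd hPR2 _, hPR2.mRecipEval_succ hw hqd hPL1 m,
    fun _ hz => szQL1_succ hw hqd hPL1 hPR2 _ hz,
    fun _ hz => smul_szQR2_succ hw hqd hPL1 hPR2 m hz⟩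

/-- the Szegő recursion relations for the matrix Szegő polynomials, their
reciprocals, and the corresponding Cauchy transforms. -/
theorem statement8 {N : ℕ} (hN : 1 ≤ N) (w : ℂ → Matrix (Fin N) (Fin N) ℂ)
    (hw : Continuous w) (hqd : QuasiDef N w)
    (PL1 PR2 : ℕ → ℕ → Matrix (Fin N) (Fin N) ℂ)
    (hPL1 : IsSzPL1 N w PL1) (hPR2 : IsSzPR2 N w PR2) :
    ∀ n : ℕ, 1 ≤ n →
      (∀ z : ℂ, mPolyEval (PL1 (n+1)) (n+1) z =
        z • mPolyEval (PL1 n) n z + szVer PL1 (n+1) * mRecipEval (PR2 n) n z) ∧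
      (∀ z : ℂ, mRecipEval (PR2 n) n z =
        (szVer PR2 n)ᴴ * mPolyEval (PL1 n) n z +
          (1 - (szVer PR2 n)ᴴ * szVer PL1 n) * mRecipEval (PR2 (n-1)) (n-1) z) ∧
      (∀ z : ℂ, ‖z‖ ≠ 1 →
        szQL1 N w PL1 (n+1) z =
          szQL1 N w PL1 n z + szVer PL1 (n+1) * szQR2 N w PR2 n z) ∧
      (∀ z : ℂ, ‖z‖ ≠ 1 →
        z • szQR2 N w PR2 n z =
          (szVer PR2 n)ᴴ * szQL1 N w PL1 n z +
            (1 - (szVer PR2 n)ᴴ * szVer PL1 n) * szQR2 N w PR2 (n-1) z) :=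
  statement8_general w hw hqd PL1 PR2 hPL1 hPR2
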